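/- For every t ∈ ℕ, every i ∈ [N], and every a ∈ [m], and for every realization of the matrix A, the message-passing sequence satisfies the closed-form identity x^{(t)}_{i→a} = Σ_{λ=1}^{t} (−1)^{λ+1} Γ^{(t)}_λ Σ_{(b_1,…,b_λ) ∈ B_a^λ} Σ_{(j_1,…,j_λ) ∈ J_i^λ} y_{b_λ} · A_{b_1 j_1} · ∏_{ι=1}^{λ−1} A_{b_ι j_{ι+1}} A_{b_{ι+1} j_{ι+1}}, where J_i^λ := { (j_1,…,j_λ) ∈ [N]^λ : j_1 = i and j_α ≠ j_{α+1} for all α ∈ [λ−1] } and B_a^λ := { (b_1,…,b_λ) ∈ [m]^λ : b_1 ≠ a and b_α ≠ b_{α+1} for all α ∈ [λ−1] }. -/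

import Mathlib

/-!
Unrolling the update once, `x^{(t+1)}_{i→a}` is `Δ^{(t)}` times the one-step term minus a
weighted sum of the messages `x^{(t)}_{j→b}` over `b ≠ a`, `j ≠ i`. The path sums satisfy the
same recursion: a walk pair of length `λ + 1` is a first step `(b, j)` with `b ≠ a`, `j ≠ i`,
followed by a walk pair of length `λ` starting from `(b, j)`, and the first step contributes the
factor `A_{b i} A_{b j}`. Since `Γ^{(t+1)}_{λ+1} = Δ^{(t)} Γ^{(t)}_λ`, the identity follows by
induction on `t`, the extra minus sign producing the alternating signs.
-/

open Finset

/-- The closed-form variance sequence `v̄^{(t)}` (`v̄^{(0)} = v⁰`). -/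
noncomputable def vbar (δ β v0 : ℝ) : ℕ → ℝ
  | 0 => v0
  | t + 1 => v0 * (1 - δ) / (δ ^ (t + 1) * (1 - δ) + 2 * β * v0 * (1 - δ ^ (t + 1)))

/-- The step size `Δ^{(t)} = δ / (2β v̄^{(t)} + δ)`. -/
noncomputable def Dstep (δ β v0 : ℝ) (t : ℕ) : ℝ := δ / (2 * β * vbar δ β v0 t + δ)

/-- `Γ^{(t)}_λ = ∏_{τ=1}^{λ} Δ^{(t−τ)}` (truncated subtraction in `ℕ`). -/
noncomputable def Gam (δ β v0 : ℝ) (t lam : ℕ) : ℝ :=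
  ∏ τ ∈ Finset.Icc 1 lam, Dstep δ β v0 (t - τ)

/-- The message-passing sequence `x^{(t)}_{i→a}`. -/
noncomputable def mpSeq {m N : ℕ} (δ β v0 : ℝ) (A : Fin m → Fin N → ℝ) (y : Fin m → ℝ) :
    ℕ → Fin N → Fin m → ℝ
  | 0 => fun _ _ => 0
  | t + 1 => fun i a =>
      Dstep δ β v0 t * (∑ b ∈ Finset.univ.filter (fun b => b ≠ a), y b * A b i)
        - Dstep δ β v0 t * (∑ b ∈ Finset.univ.filter (fun b => b ≠ a),
            ∑ j ∈ Finset.univ.filter (fun j => j ≠ i), A b i * A b j * mpSeq δ β v0 A y t j b)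

/-- The index set `J_i^{l+1}`; tuples are indexed from `0`. -/
def Jset {N : ℕ} (i : Fin N) (l : ℕ) : Finset (Fin (l + 1) → Fin N) :=
  Finset.univ.filter (fun j => j 0 = i ∧ ∀ α : Fin l, j α.castSucc ≠ j α.succ)

/-- The index set `B_a^{l+1}`; tuples are indexed from `0`. -/
def Bset {m : ℕ} (a : Fin m) (l : ℕ) : Finset (Fin (l + 1) → Fin m) :=
  Finset.univ.filter (fun b => b 0 ≠ a ∧ ∀ α : Fin l, b α.castSucc ≠ b α.succ)

section Walks

variable {α M : Type*} [Fintype α] [DecidableEq α] [AddCommMonoid M]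

/-- Walks with `l` steps in the complete graph on `α` whose first vertex satisfies `p`:
`Bset a l` is `walksFrom (· ≠ a) l` and `Jset i l` is `walksFrom (· = i) l`, definitionally. -/
def walksFrom (p : α → Prop) [DecidablePred p] (l : ℕ) : Finset (Fin (l + 1) → α) :=
  univ.filter fun b => p (b 0) ∧ ∀ k : Fin l, b k.castSucc ≠ b k.succ

lemma sum_fin_cons {n : ℕ} (s : Finset (Fin (n + 1) → α)) (f : (Fin (n + 1) → α) → M) :
    ∑ b ∈ s, f b = ∑ x, ∑ b ∈ univ.filter (fun b => Fin.cons x b ∈ s), f (Fin.cons x b) := by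
  simp only [sum_filter, ← Fintype.sum_prod_type', ← Fintype.sum_ite_mem s]
  exact ((Fin.consEquiv fun _ => α).sum_comp fun b => if b ∈ s then f b else 0).symm

variable (p : α → Prop) [DecidablePred p]

lemma cons_mem_walksFrom {l : ℕ} (x : α) (b : Fin (l + 1) → α) :
    Fin.cons x b ∈ walksFrom p (l + 1) ↔ p x ∧ b ∈ walksFrom (· ≠ x) l := by
  simp only [walksFrom, mem_filter, mem_univ, true_and, Fin.forall_fin_succ, Fin.cons_zero,
    Fin.castSucc_zero, Fin.cons_succ, ← Fin.succ_castSucc, ne_comm (a := x)]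

lemma sum_walksFrom_succ {l : ℕ} (f : (Fin (l + 2) → α) → M) :
    ∑ b ∈ walksFrom p (l + 1), f b
      = ∑ x ∈ univ.filter p, ∑ b ∈ walksFrom (· ≠ x) l, f (Fin.cons x b) := by
  rw [sum_fin_cons, sum_filter]
  refine Fintype.sum_congr _ _ fun x => ?_
  by_cases hx : p x <;> simp [cons_mem_walksFrom, hx]

lemma sum_walksFrom_eq_sum_sum_walksFrom_eq {l : ℕ} (f : (Fin (l + 1) → α) → M) :
    ∑ b ∈ walksFrom p l, f b = ∑ x ∈ univ.filter p, ∑ b ∈ walksFrom (· = x) l, f b := by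
  rw [← sum_fiberwise_of_maps_to (g := fun b => b 0) (t := univ.filter p)]
  · refine sum_congr rfl fun x hx => sum_congr ?_ fun _ _ => rfl
    ext b
    simp only [walksFrom, mem_filter, mem_univ, true_and] at hx ⊢
    constructor
    · rintro ⟨⟨-, h⟩, rfl⟩; exact ⟨rfl, h⟩
    · rintro ⟨rfl, h⟩; exact ⟨⟨hx, h⟩, rfl⟩
  · intro b hb
    simp only [walksFrom, mem_filter, mem_univ, true_and] at hb ⊢
    exact hb.1

lemma walksFrom_zero_eq_singleton (x : α) : walksFrom (· = x) 0 = {fun _ => x} := by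
  ext b
  simp [walksFrom, funext_iff, Fin.forall_fin_succ]

end Walks

section PathSums

variable {R : Type*} [CommSemiring R] {ι κ : Type*}

def pathWeight (A : ι → κ → R) (y : ι → R) {l : ℕ} (b : Fin (l + 1) → ι)
    (j : Fin (l + 1) → κ) : R :=
  y (b (Fin.last l)) * A (b 0) (j 0) *
    ∏ α : Fin l, (A (b α.castSucc) (j α.succ) * A (b α.succ) (j α.succ))

lemma pathWeight_cons (A : ι → κ → R) (y : ι → R) {l : ℕ} (b₀ : ι) (b : Fin (l + 1) → ι)
    (i : κ) (j : Fin (l + 1) → κ) :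
    pathWeight A y (Fin.cons b₀ b : Fin (l + 2) → ι) (Fin.cons i j : Fin (l + 2) → κ)
      = A b₀ i * A b₀ (j 0) * pathWeight A y b j := by
  rw [pathWeight, pathWeight, Fin.prod_univ_succ, ← Fin.succ_last]
  simp only [Fin.cons_succ, Fin.cons_zero, Fin.castSucc_zero, ← Fin.succ_castSucc]
  ring

variable [Fintype ι] [DecidableEq ι] [Fintype κ] [DecidableEq κ]

def pathSum (A : ι → κ → R) (y : ι → R) (a : ι) (i : κ) (l : ℕ) : R :=
  ∑ b ∈ walksFrom (· ≠ a) l, ∑ j ∈ walksFrom (· = i) l, pathWeight A y b j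

lemma pathSum_zero (A : ι → κ → R) (y : ι → R) (a : ι) (i : κ) :
    pathSum A y a i 0 = ∑ b ∈ univ.filter (· ≠ a), y b * A b i := by
  rw [pathSum, sum_walksFrom_eq_sum_sum_walksFrom_eq]
  simp [walksFrom_zero_eq_singleton, pathWeight]

lemma pathSum_succ (A : ι → κ → R) (y : ι → R) (a : ι) (i : κ) (l : ℕ) :
    pathSum A y a i (l + 1)
      = ∑ b ∈ univ.filter (· ≠ a), ∑ j ∈ univ.filter (· ≠ i),
          A b i * A b j * pathSum A y b j l := by
  simp only [pathSum, sum_walksFrom_succ, filter_eq', mem_univ, if_true, sum_singleton]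
  refine sum_congr rfl fun b _ => ?_
  rw [sum_comm, sum_walksFrom_eq_sum_sum_walksFrom_eq]
  refine sum_congr rfl fun j _ => ?_
  rw [mul_sum, sum_comm]
  refine sum_congr rfl fun b' _ => ?_
  rw [mul_sum]
  refine sum_congr rfl fun j' hj' => ?_
  rw [pathWeight_cons, (mem_filter.1 hj').2.1]

end PathSums

lemma Gam_succ_succ (δ β v0 : ℝ) (t l : ℕ) :
    Gam δ β v0 (t + 1) (l + 1) = Dstep δ β v0 t * Gam δ β v0 t l := by
  induction l with
  | zero => simp [Gam]
  | succ l ih =>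
    rw [Gam, prod_Icc_succ_top (by omega), ← Gam, ih, Gam, Gam, prod_Icc_succ_top (by omega),
      Nat.add_sub_add_right, mul_assoc]

theorem mpSeq_eq_sum_pathSum {m N : ℕ} (δ β v0 : ℝ) (A : Fin m → Fin N → ℝ) (y : Fin m → ℝ)
    (t : ℕ) (i : Fin N) (a : Fin m) :
    mpSeq δ β v0 A y t i a
      = ∑ l ∈ range t, (-1 : ℝ) ^ l * Gam δ β v0 t (l + 1) * pathSum A y a i l := by
  induction t generalizing i a with
  | zero => rfl
  | succ t ih =>
    have hstep : ∑ b ∈ univ.filter (· ≠ a), ∑ j ∈ univ.filter (· ≠ i),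
        A b i * A b j * mpSeq δ β v0 A y t j b
          = ∑ l ∈ range t, (-1 : ℝ) ^ l * Gam δ β v0 t (l + 1) * pathSum A y a i (l + 1) := by
      simp only [ih, pathSum_succ, mul_sum]
      rw [sum_comm (s := range t)]
      refine sum_congr rfl fun b _ => ?_
      rw [sum_comm (s := range t)]
      exact sum_congr rfl fun j _ => sum_congr rfl fun l _ => by ring
    rw [mpSeq]
    dsimp only
    rw [hstep, sum_range_succ', ← pathSum_zero]
    simp only [Gam_succ_succ, pow_succ, mul_sum, sub_eq_add_neg, ← sum_neg_distrib]
    rw [add_comm]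
    congr 1
    · exact sum_congr rfl fun l _ => by ring
    · simp [Gam]

/-- Here `λ = l + 1`, with `l` running over `0, …, t−1`. -/
theorem stmt3_general {m N : ℕ} (δ β v0 : ℝ) (A : Fin m → Fin N → ℝ) (y : Fin m → ℝ)
    (t : ℕ) (i : Fin N) (a : Fin m) :
    mpSeq δ β v0 A y t i a
      = ∑ l ∈ Finset.range t, (-1 : ℝ) ^ l * Gam δ β v0 t (l + 1) *
          ∑ b ∈ Bset a l, ∑ j ∈ Jset i l,
            y (b (Fin.last l)) * A (b 0) (j 0) *
              ∏ α : Fin l, (A (b α.castSucc) (j α.succ) * A (b α.succ) (j α.succ)) :=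
  mpSeq_eq_sum_pathSum δ β v0 A y t i a

/-- closed-form path expansion of the message-passing iterates,
`x^{(t)}_{i→a} = Σ_{λ=1}^t (−1)^{λ+1} Γ^{(t)}_λ Σ_{B_a^λ} Σ_{J_i^λ}
 y_{b_λ} A_{b_1 j_1} ∏_{ι=1}^{λ−1} A_{b_ι j_{ι+1}} A_{b_{ι+1} j_{ι+1}}`
(here `λ = l + 1` with `l` running over `0, …, t−1`). -/
theorem stmt3 {m N : ℕ} (δ β v0 : ℝ) (hδ : δ ∈ Set.Ioo (0:ℝ) 1) (hβ : 0 < β)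
    (hv0 : 0 < v0) (A : Fin m → Fin N → ℝ) (y : Fin m → ℝ)
    (t : ℕ) (i : Fin N) (a : Fin m) :
    mpSeq δ β v0 A y t i a
      = ∑ l ∈ Finset.range t, (-1 : ℝ) ^ l * Gam δ β v0 t (l + 1) *
          ∑ b ∈ Bset a l, ∑ j ∈ Jset i l,
            y (b (Fin.last l)) * A (b 0) (j 0) *
              ∏ α : Fin l, (A (b α.castSucc) (j α.succ) * A (b α.succ) (j α.succ)) :=
  stmt3_general δ β v0 A y t i a
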